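/- arXiv:2009.14566 — 2 statements merged into one kernel-verified Lean document; each statement's English description precedes it below -/
import Mathlib

section
/- Let ω be a smooth function on an open set Ω ⊆ ℝⁿ satisfying Δω = -G - (a-β)f(ω), where G = |∇ω|² + βf(ω), f is C², and a, β are constants. Then ΔG ≥ (2/n)G² + ((β-2a)f'(ω) + βf''(ω) - (4/n)(β-a)f(ω))G + (2/n)(β-a)²f(ω)² - β(β-a)f(ω)f'(ω) - β²f(ω)f''(ω) - 2⟨∇ω, ∇G⟩. -/
/-- The (i,j) second partial derivative of `f` at `x`. -/
noncomputable def secondDeriv (n : ℕ) (f : EuclideanSpace ℝ (Fin n) → ℝ)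
    (x : EuclideanSpace ℝ (Fin n)) (i j : Fin n) : ℝ :=
  iteratedFDeriv ℝ 2 f x ![EuclideanSpace.single i 1, EuclideanSpace.single j 1]

/-- The Laplacian of `f` at `x`, as the trace of the Hessian. -/
noncomputable def lap (n : ℕ) (f : EuclideanSpace ℝ (Fin n) → ℝ)
    (x : EuclideanSpace ℝ (Fin n)) : ℝ :=
  ∑ i, secondDeriv n f x i i

/-- The i-th partial derivative. -/
noncomputable def pdv (n : ℕ) (h : EuclideanSpace ℝ (Fin n) → ℝ) (i : Fin n)
    (y : EuclideanSpace ℝ (Fin n)) : ℝ :=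
  fderiv ℝ h y (EuclideanSpace.single i 1)

lemma pdv_contDiffAt {n : ℕ} {h : EuclideanSpace ℝ (Fin n) → ℝ}
    {y : EuclideanSpace ℝ (Fin n)} (hh : ContDiffAt ℝ (⊤ : ℕ∞) h y) (i : Fin n) :
    ContDiffAt ℝ (⊤ : ℕ∞) (pdv n h i) y :=
  (hh.fderiv_right (by simp)).clm_apply contDiffAt_const

lemma pdv_pdv_eq {n : ℕ} {h : EuclideanSpace ℝ (Fin n) → ℝ} {y : EuclideanSpace ℝ (Fin n)}
    (hh : ContDiffAt ℝ 2 h y) (i j : Fin n) :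
    pdv n (pdv n h j) i y
      = fderiv ℝ (fderiv ℝ h) y (EuclideanSpace.single i 1) (EuclideanSpace.single j 1) := by
  have hd : DifferentiableAt ℝ (fderiv ℝ h) y :=
    (hh.fderiv_right (m := 1) (by norm_num)).differentiableAt (by simp)
  have H := (ContinuousLinearMap.apply ℝ ℝ
      (EuclideanSpace.single j (1:ℝ))).hasFDerivAt.comp y hd.hasFDerivAt
  have hfun : pdv n h j
      = (ContinuousLinearMap.apply ℝ ℝ (EuclideanSpace.single j (1:ℝ))) ∘ (fderiv ℝ h) := rfl
  simp only [pdv, hfun]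
  rw [H.fderiv]
  simp

lemma secondDeriv_eq_pdv {n : ℕ} {h : EuclideanSpace ℝ (Fin n) → ℝ}
    {y : EuclideanSpace ℝ (Fin n)} (hh : ContDiffAt ℝ 2 h y) (i j : Fin n) :
    secondDeriv n h y i j = pdv n (pdv n h j) i y := by
  rw [pdv_pdv_eq hh, secondDeriv, iteratedFDeriv_two_apply]
  simp

lemma pdv_symm {n : ℕ} {h : EuclideanSpace ℝ (Fin n) → ℝ} {y : EuclideanSpace ℝ (Fin n)}
    (hh : ContDiffAt ℝ 2 h y) (i j : Fin n) :
    pdv n (pdv n h j) i y = pdv n (pdv n h i) j y := by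
  rw [pdv_pdv_eq hh, pdv_pdv_eq hh]
  exact hh.isSymmSndFDerivAt (by simp) _ _

lemma gradient_coord {n : ℕ} (h : EuclideanSpace ℝ (Fin n) → ℝ) (y : EuclideanSpace ℝ (Fin n))
    (i : Fin n) : gradient h y i = pdv n h i y := by
  have h1 : (inner ℝ (gradient h y) (EuclideanSpace.single i (1:ℝ)) : ℝ) = pdv n h i y :=
    InnerProductSpace.toDual_symm_apply
  rw [← h1, EuclideanSpace.inner_single_right]
  simp

lemma inner_gradient_gradient {n : ℕ} (h₁ h₂ : EuclideanSpace ℝ (Fin n) → ℝ)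
    (y : EuclideanSpace ℝ (Fin n)) :
    (inner ℝ (gradient h₁ y) (gradient h₂ y) : ℝ) = ∑ i, pdv n h₁ i y * pdv n h₂ i y := by
  rw [PiLp.inner_apply]
  simp [gradient_coord]
  exact Finset.sum_congr rfl fun i _ => mul_comm _ _

lemma norm_gradient_sq {n : ℕ} (h : EuclideanSpace ℝ (Fin n) → ℝ)
    (y : EuclideanSpace ℝ (Fin n)) :
    ‖gradient h y‖ ^ 2 = ∑ i, pdv n h i y * pdv n h i y := by
  rw [← real_inner_self_eq_norm_sq, inner_gradient_gradient]

lemma pdv_congr {n : ℕ} {c d : EuclideanSpace ℝ (Fin n) → ℝ} {s : Set (EuclideanSpace ℝ (Fin n))}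
    (hs : IsOpen s) {x : EuclideanSpace ℝ (Fin n)} (hx : x ∈ s)
    (h : ∀ y ∈ s, c y = d y) (j : Fin n) : pdv n c j x = pdv n d j x := by
  simp only [pdv]
  rw [Filter.EventuallyEq.fderiv_eq (Filter.eventuallyEq_of_mem (hs.mem_nhds hx) h)]

lemma pdv_add {n : ℕ} {c d : EuclideanSpace ℝ (Fin n) → ℝ} {x : EuclideanSpace ℝ (Fin n)}
    (hc : DifferentiableAt ℝ c x) (hd : DifferentiableAt ℝ d x) (j : Fin n) :
    pdv n (fun y => c y + d y) j x = pdv n c j x + pdv n d j x := by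
  simp only [pdv]
  rw [fderiv_fun_add hc hd]
  simp

lemma pdv_sub {n : ℕ} {c d : EuclideanSpace ℝ (Fin n) → ℝ} {x : EuclideanSpace ℝ (Fin n)}
    (hc : DifferentiableAt ℝ c x) (hd : DifferentiableAt ℝ d x) (j : Fin n) :
    pdv n (fun y => c y - d y) j x = pdv n c j x - pdv n d j x := by
  simp only [pdv]
  rw [fderiv_fun_sub hc hd]
  simp

lemma pdv_neg {n : ℕ} {c : EuclideanSpace ℝ (Fin n) → ℝ} {x : EuclideanSpace ℝ (Fin n)}
    (j : Fin n) : pdv n (fun y => -c y) j x = -pdv n c j x := by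
  simp only [pdv]
  rw [fderiv_fun_neg]
  simp

lemma pdv_mul {n : ℕ} {c d : EuclideanSpace ℝ (Fin n) → ℝ} {x : EuclideanSpace ℝ (Fin n)}
    (hc : DifferentiableAt ℝ c x) (hd : DifferentiableAt ℝ d x) (j : Fin n) :
    pdv n (fun y => c y * d y) j x = c x * pdv n d j x + d x * pdv n c j x := by
  simp only [pdv]
  rw [fderiv_fun_mul hc hd]
  simp

lemma pdv_const_mul {n : ℕ} {d : EuclideanSpace ℝ (Fin n) → ℝ} {x : EuclideanSpace ℝ (Fin n)}
    (hd : DifferentiableAt ℝ d x) (b : ℝ) (j : Fin n) :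
    pdv n (fun y => b * d y) j x = b * pdv n d j x := by
  simp only [pdv]
  rw [fderiv_const_mul hd b]
  simp

lemma pdv_sum {n : ℕ} {ι : Type*} (s : Finset ι) {A : ι → EuclideanSpace ℝ (Fin n) → ℝ}
    {x : EuclideanSpace ℝ (Fin n)} (h : ∀ i ∈ s, DifferentiableAt ℝ (A i) x) (j : Fin n) :
    pdv n (fun y => ∑ i ∈ s, A i y) j x = ∑ i ∈ s, pdv n (A i) j x := by
  simp only [pdv]
  rw [fderiv_fun_sum h]
  simp

lemma pdv_comp {n : ℕ} {g : ℝ → ℝ} {h : EuclideanSpace ℝ (Fin n) → ℝ}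
    {x : EuclideanSpace ℝ (Fin n)} (hg : DifferentiableAt ℝ g (h x))
    (hh : DifferentiableAt ℝ h x) (j : Fin n) :
    pdv n (fun y => g (h y)) j x = deriv g (h x) * pdv n h j x := by
  simp only [pdv]
  rw [show (fun y => g (h y)) = g ∘ h from rfl,
    (hg.hasDerivAt.comp_hasFDerivAt x hh.hasFDerivAt).fderiv]
  simp

theorem stmt13 (n : ℕ) (hn : 1 ≤ n) (Ω : Set (EuclideanSpace ℝ (Fin n)))
    (hΩ : IsOpen Ω) (ω : EuclideanSpace ℝ (Fin n) → ℝ) (f : ℝ → ℝ) (a β : ℝ)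
    (hω : ContDiffOn ℝ (⊤ : ℕ∞) ω Ω) (hf : ContDiff ℝ 2 f)
    (G : EuclideanSpace ℝ (Fin n) → ℝ)
    (hG : G = fun x => ‖gradient ω x‖ ^ 2 + β * f (ω x))
    (heq : ∀ x ∈ Ω, lap n ω x = -G x - (a - β) * f (ω x)) :
    ∀ x ∈ Ω,
      lap n G x ≥
        (2 / n) * G x ^ 2 +
          ((β - 2 * a) * deriv f (ω x) + β * deriv (deriv f) (ω x) -
              (4 / n) * (β - a) * f (ω x)) * G x +
          (2 / n) * (β - a) ^ 2 * f (ω x) ^ 2 -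
          β * (β - a) * f (ω x) * deriv f (ω x) -
          β ^ 2 * f (ω x) * deriv (deriv f) (ω x) -
          2 * (inner ℝ (gradient ω x) (gradient G x) : ℝ) := by
  intro x hx
  -- basic smoothness facts
  have hsm : ∀ y ∈ Ω, ContDiffAt ℝ (⊤ : ℕ∞) ω y := fun y hy => hω.contDiffAt (hΩ.mem_nhds hy)
  have hPsm : ∀ y ∈ Ω, ∀ i, ContDiffAt ℝ (⊤ : ℕ∞) (pdv n ω i) y :=
    fun y hy i => pdv_contDiffAt (hsm y hy) i
  have hωd : ∀ y ∈ Ω, DifferentiableAt ℝ ω y := fun y hy => (hsm y hy).differentiableAt (by simp)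
  have hPd : ∀ y ∈ Ω, ∀ i, DifferentiableAt ℝ (pdv n ω i) y :=
    fun y hy i => (hPsm y hy i).differentiableAt (by simp)
  have hPPd : ∀ y ∈ Ω, ∀ i j, DifferentiableAt ℝ (pdv n (pdv n ω i) j) y :=
    fun y hy i j => (pdv_contDiffAt (hPsm y hy i) j).differentiableAt (by simp)
  have hfd : Differentiable ℝ f := hf.differentiable (by norm_num)
  have hf2 : ContDiff ℝ (1 + 1) f := by exact_mod_cast hf
  have hf1 : ContDiff ℝ 1 (deriv f) := (contDiff_succ_iff_deriv.mp hf2).2.2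
  have hdf : Differentiable ℝ (deriv f) := hf1.differentiable (by simp)
  -- G as an explicit function
  have hGfun : G = fun z => (∑ i, pdv n ω i z * pdv n ω i z) + β * f (ω z) := by
    funext z
    simp only [hG]
    rw [norm_gradient_sq]
  -- differentiability of G on Ω
  have hGd : ∀ y ∈ Ω, DifferentiableAt ℝ G y := by
    intro y hy
    rw [hGfun]
    exact (DifferentiableAt.fun_sum fun i _ => (hPd y hy i).mul (hPd y hy i)).add
      (((hfd (ω y)).comp y (hωd y hy)).const_mul β)
  -- first derivative formula of G on Ω
  have hGpd : ∀ y ∈ Ω, ∀ j, pdv n G j y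
      = (∑ i, (pdv n ω i y * pdv n (pdv n ω i) j y + pdv n ω i y * pdv n (pdv n ω i) j y))
        + β * (deriv f (ω y) * pdv n ω j y) := by
    intro y hy j
    have d1 : DifferentiableAt ℝ (fun z => ∑ i, pdv n ω i z * pdv n ω i z) y :=
      DifferentiableAt.fun_sum fun i _ => (hPd y hy i).mul (hPd y hy i)
    have d2 : DifferentiableAt ℝ (fun z => f (ω z)) y := (hfd (ω y)).comp y (hωd y hy)
    rw [hGfun, pdv_add d1 (d2.const_mul β), pdv_const_mul d2 β j,
      pdv_comp (hfd (ω y)) (hωd y hy) j,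
      pdv_sum Finset.univ (fun i _ => (hPd y hy i).fun_mul (hPd y hy i)) j]
    congr 1
    exact Finset.sum_congr rfl fun i _ => pdv_mul (hPd y hy i) (hPd y hy i) j
  -- G is C^2 at x
  have hGsm : ContDiffAt ℝ 2 G x := by
    rw [hGfun]
    exact (ContDiffAt.sum fun i _ =>
        ((hPsm x hx i).of_le (by norm_cast)).mul ((hPsm x hx i).of_le (by norm_cast))).add
      (contDiffAt_const.mul (hf.contDiffAt.comp x ((hsm x hx).of_le (by norm_cast))))
  -- second derivative of G in direction (j,j)
  have key_j : ∀ j, pdv n (pdv n G j) j x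
      = (∑ i, (2 * (pdv n ω i x * pdv n (pdv n (pdv n ω i) j) j x)
              + 2 * (pdv n (pdv n ω i) j x * pdv n (pdv n ω i) j x)))
        + (β * (deriv f (ω x) * pdv n (pdv n ω j) j x)
           + β * (pdv n ω j x * (deriv (deriv f) (ω x) * pdv n ω j x))) := by
    intro j
    have dP : ∀ i, DifferentiableAt ℝ (pdv n ω i) x := hPd x hx
    have dQ : ∀ i, DifferentiableAt ℝ (pdv n (pdv n ω i) j) x := fun i => hPPd x hx i j
    have dfp : DifferentiableAt ℝ (fun z => deriv f (ω z)) x := (hdf (ω x)).comp x (hωd x hx)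
    have dterm : ∀ i, DifferentiableAt ℝ
        (fun y => pdv n ω i y * pdv n (pdv n ω i) j y
          + pdv n ω i y * pdv n (pdv n ω i) j y) x :=
      fun i => ((dP i).mul (dQ i)).add ((dP i).mul (dQ i))
    have dsum : DifferentiableAt ℝ
        (fun y => ∑ i, (pdv n ω i y * pdv n (pdv n ω i) j y
          + pdv n ω i y * pdv n (pdv n ω i) j y)) x :=
      DifferentiableAt.fun_sum fun i _ => dterm i
    have dlast : DifferentiableAt ℝ (fun y => deriv f (ω y) * pdv n ω j y) x :=
      dfp.mul (dP j)
    have hterm : ∀ i, pdv n (fun y => pdv n ω i y * pdv n (pdv n ω i) j y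
          + pdv n ω i y * pdv n (pdv n ω i) j y) j x
        = 2 * (pdv n ω i x * pdv n (pdv n (pdv n ω i) j) j x)
          + 2 * (pdv n (pdv n ω i) j x * pdv n (pdv n ω i) j x) := by
      intro i
      rw [pdv_add ((dP i).fun_mul (dQ i)) ((dP i).fun_mul (dQ i)), pdv_mul (dP i) (dQ i) j]
      ring
    rw [pdv_congr hΩ hx (fun y hy => hGpd y hy j) j,
      pdv_add dsum (dlast.const_mul β), pdv_const_mul dlast β j,
      pdv_mul dfp (dP j) j, pdv_comp (hdf (ω x)) (hωd x hx) j,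
      pdv_sum Finset.univ (fun i _ => dterm i) j,
      Finset.sum_congr rfl fun i _ => hterm i]
    ring
  -- lap G as a sum of pdv's
  have hlap0 : lap n G x = ∑ j, pdv n (pdv n G j) j x := by
    simp only [lap]
    exact Finset.sum_congr rfl fun j _ => secondDeriv_eq_pdv hGsm j j
  -- lap ω as a sum of pdv's, on Ω
  have hlapω : ∀ y ∈ Ω, lap n ω y = ∑ j, pdv n (pdv n ω j) j y := by
    intro y hy
    simp only [lap]
    exact Finset.sum_congr rfl fun j _ => secondDeriv_eq_pdv ((hsm y hy).of_le (by norm_cast)) j j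
  -- the swap identity: sum over j of third derivatives
  have hswap : ∀ i, (∑ j, pdv n (pdv n (pdv n ω i) j) j x)
      = -pdv n G i x - (a - β) * (deriv f (ω x) * pdv n ω i x) := by
    intro i
    have h1 : ∀ j, pdv n (pdv n (pdv n ω i) j) j x = pdv n (pdv n (pdv n ω j) j) i x := by
      intro j
      have e1 : pdv n (pdv n (pdv n ω i) j) j x = pdv n (pdv n (pdv n ω j) i) j x :=
        pdv_congr hΩ hx (fun y hy => pdv_symm ((hsm y hy).of_le (by norm_cast)) j i) j
      have e2 : pdv n (pdv n (pdv n ω j) i) j x = pdv n (pdv n (pdv n ω j) j) i x :=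
        pdv_symm ((hPsm x hx j).of_le (by norm_cast)) j i
      rw [e1, e2]
    have h2 : (∑ j, pdv n (pdv n (pdv n ω j) j) i x)
        = pdv n (fun y => ∑ j, pdv n (pdv n ω j) j y) i x :=
      (pdv_sum Finset.univ (fun j _ => hPPd x hx j j) i).symm
    have h3 : pdv n (fun y => ∑ j, pdv n (pdv n ω j) j y) i x
        = pdv n (fun y => -G y - (a - β) * f (ω y)) i x := by
      apply pdv_congr hΩ hx _ i
      intro y hy
      rw [← hlapω y hy, heq y hy]
    have d2 : DifferentiableAt ℝ (fun z => f (ω z)) x := (hfd (ω x)).comp x (hωd x hx)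
    have h4 : pdv n (fun y => -G y - (a - β) * f (ω y)) i x
        = -pdv n G i x - (a - β) * (deriv f (ω x) * pdv n ω i x) := by
      rw [pdv_sub (hGd x hx).fun_neg (d2.const_mul (a - β)) i, pdv_neg i,
        pdv_const_mul d2 (a - β) i, pdv_comp (hfd (ω x)) (hωd x hx) i]
    rw [Finset.sum_congr rfl fun j _ => h1 j, h2, h3, h4]
  -- abbreviations
  set F : ℝ := f (ω x) with hF
  set fp : ℝ := deriv f (ω x) with hfp
  set fpp : ℝ := deriv (deriv f) (ω x) with hfpp
  set u : ℝ := ∑ i, pdv n ω i x * pdv n ω i x with hu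
  set S : ℝ := ∑ i, pdv n ω i x * pdv n G i x with hS
  set T : ℝ := ∑ j, ∑ i, pdv n (pdv n ω i) j x * pdv n (pdv n ω i) j x with hT
  set L : ℝ := ∑ j, pdv n (pdv n ω j) j x with hL
  -- the main identity for lap G
  have hmain : lap n G x = 2 * T - 2 * S - 2 * (a - β) * fp * u + β * fp * L + β * fpp * u := by
    rw [hlap0, Finset.sum_congr rfl fun j _ => key_j j]
    simp only [Finset.sum_add_distrib]
    have c1 : (∑ j, ∑ i, 2 * (pdv n ω i x * pdv n (pdv n (pdv n ω i) j) j x))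
        = -2 * S - 2 * (a - β) * fp * u := by
      rw [Finset.sum_comm]
      have e1 : ∀ i, (∑ j, 2 * (pdv n ω i x * pdv n (pdv n (pdv n ω i) j) j x))
          = 2 * (pdv n ω i x * (-pdv n G i x - (a - β) * (fp * pdv n ω i x))) := by
        intro i
        rw [← Finset.mul_sum, ← Finset.mul_sum, hswap i]
      rw [Finset.sum_congr rfl fun i _ => e1 i]
      have e2 : ∀ i, 2 * (pdv n ω i x * (-pdv n G i x - (a - β) * (fp * pdv n ω i x)))
          = (-2) * (pdv n ω i x * pdv n G i x)
            + (-2 * (a - β) * fp) * (pdv n ω i x * pdv n ω i x) := by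
        intro i; ring
      rw [Finset.sum_congr rfl fun i _ => e2 i, Finset.sum_add_distrib,
        ← Finset.mul_sum, ← Finset.mul_sum, ← hS, ← hu]
      ring
    have c2 : (∑ j, ∑ i, 2 * (pdv n (pdv n ω i) j x * pdv n (pdv n ω i) j x)) = 2 * T := by
      rw [hT, Finset.mul_sum]
      exact Finset.sum_congr rfl fun j _ => (Finset.mul_sum _ _ _).symm
    have c3 : (∑ j, β * (fp * pdv n (pdv n ω j) j x)) = β * fp * L := by
      rw [hL, Finset.mul_sum]
      exact Finset.sum_congr rfl fun j _ => by ring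
    have c4 : (∑ j, β * (pdv n ω j x * (fpp * pdv n ω j x))) = β * fpp * u := by
      rw [hu, Finset.mul_sum]
      exact Finset.sum_congr rfl fun j _ => by ring
    rw [c1, c2, c3, c4]
    ring
  -- values of G and L
  have hGx : G x = u + β * F := by
    rw [hGfun]
  have hLval : L = -G x - (a - β) * F := by
    rw [hL, ← hlapω x hx]
    exact heq x hx
  -- Cauchy-Schwarz part
  have hdiag : ∀ j, pdv n (pdv n ω j) j x ^ 2
      ≤ ∑ i, pdv n (pdv n ω i) j x * pdv n (pdv n ω i) j x := by
    intro j
    have h0 := Finset.single_le_sum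
      (f := fun i => pdv n (pdv n ω i) j x * pdv n (pdv n ω i) j x)
      (fun i _ => mul_self_nonneg _) (Finset.mem_univ j)
    rw [pow_two]
    exact h0
  have hT1 : (∑ j, pdv n (pdv n ω j) j x ^ 2) ≤ T := by
    rw [hT]
    exact Finset.sum_le_sum fun j _ => hdiag j
  have hnpos : (0:ℝ) < n := by
    have : 0 < n := by omega
    exact_mod_cast this
  have hCS : L ^ 2 ≤ (n:ℝ) * ∑ j, pdv n (pdv n ω j) j x ^ 2 := by
    rw [hL]
    have h0 := sq_sum_le_card_mul_sum_sq (s := Finset.univ)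
      (f := fun j => pdv n (pdv n ω j) j x)
    simpa using h0
  have hTL : 2 / (n:ℝ) * L ^ 2 ≤ 2 * T := by
    have h1 : L ^ 2 ≤ (n:ℝ) * T :=
      le_trans hCS (mul_le_mul_of_nonneg_left hT1 (le_of_lt hnpos))
    rw [div_mul_eq_mul_div, div_le_iff₀ hnpos]
    nlinarith
  -- conclusion
  rw [ge_iff_le, inner_gradient_gradient ω G x, ← hS]
  have hn0 : (n:ℝ) ≠ 0 := ne_of_gt hnpos
  calc 2 / ↑n * G x ^ 2 + ((β - 2 * a) * fp + β * fpp - 4 / ↑n * (β - a) * F) * G x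
        + 2 / ↑n * (β - a) ^ 2 * F ^ 2 - β * (β - a) * F * fp - β ^ 2 * F * fpp - 2 * S
      = 2 / ↑n * L ^ 2 + (β * fp * L + β * fpp * u - 2 * (a - β) * fp * u - 2 * S) := by
        rw [hLval, hGx]
        field_simp
        ring
    _ ≤ 2 * T + (β * fp * L + β * fpp * u - 2 * (a - β) * fp * u - 2 * S) := by
        linarith
    _ = lap n G x := by rw [hmain]; ring
end

section
/- There is no smooth positive function u : ℝⁿ → ℝ (n ≥ 1) satisfying Δu + a·u^{p+1} = 0 on all of ℝⁿ, when a < 0 and p > 0. -/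
open Set Filter Real Topology

/-- 1D second derivative test at a local max. -/
lemma secondTest {ψ ψ' : ℝ → ℝ} {ε m : ℝ} (hε : 0 < ε)
    (hd : ∀ t ∈ Set.Ioo (-ε) ε, HasDerivAt ψ (ψ' t) t)
    (hd2 : HasDerivAt ψ' m 0)
    (hmax : ∀ t ∈ Set.Ioo (-ε) ε, ψ t ≤ ψ 0) : m ≤ 0 := by
  by_contra hcon
  push_neg at hcon
  have h0mem : (0:ℝ) ∈ Set.Ioo (-ε) ε := ⟨by linarith, hε⟩
  have hloc : IsLocalMax ψ 0 :=
    Filter.eventually_of_mem (Ioo_mem_nhds (by linarith) hε) hmax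
  have h0 : ψ' 0 = 0 := by
    have h := hloc.deriv_eq_zero
    rwa [(hd 0 h0mem).deriv] at h
  have hs := hasDerivAt_iff_tendsto_slope.1 hd2
  have hpos : ∀ᶠ t in 𝓝[≠] (0:ℝ), 0 < slope ψ' 0 t :=
    hs.eventually (eventually_gt_nhds hcon)
  have hpos' : ∀ᶠ t in 𝓝[>] (0:ℝ), 0 < ψ' t := by
    have := hpos.filter_mono (nhdsWithin_mono 0 (fun t ht => ne_of_gt ht))
    filter_upwards [this, self_mem_nhdsWithin] with t h1 h2
    have : slope ψ' 0 t = ψ' t / t := by simp [slope, h0]; rw [div_eq_inv_mul]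
    rw [this] at h1
    exact (div_pos_iff.1 h1).elim (fun h => h.1) (fun h => absurd h.2 (not_lt.2 h2.le))
  rcases (Metric.mem_nhdsWithin_iff).1 hpos' with ⟨δ, hδ, hsub⟩
  set c := min (δ/2) (ε/2) with hc
  have hc0 : 0 < c := lt_min (by linarith) (by linarith)
  have hcε : c < ε := lt_of_le_of_lt (min_le_right _ _) (by linarith)
  have hderivpos : ∀ t ∈ Set.Ioo (0:ℝ) c, 0 < deriv ψ t := by
    intro t ht
    have htI : t ∈ Set.Ioo (-ε) ε := ⟨by linarith [ht.1], lt_trans ht.2 hcε⟩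
    rw [(hd t htI).deriv]
    have : t ∈ Metric.ball (0:ℝ) δ ∩ Set.Ioi 0 := by
      constructor
      · simp [Real.dist_eq, abs_of_pos ht.1]
        have : c ≤ δ/2 := min_le_left _ _
        nlinarith [ht.2]
      · exact ht.1
    exact hsub this
  have hmono : StrictMonoOn ψ (Set.Icc 0 c) := by
    apply strictMonoOn_of_deriv_pos (convex_Icc 0 c)
    · intro t ht
      have : t ∈ Set.Ioo (-ε) ε := ⟨by linarith [ht.1], lt_of_le_of_lt ht.2 hcε⟩
      exact ((hd t this).differentiableAt.continuousAt).continuousWithinAt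
    · intro t ht
      rw [interior_Icc] at ht
      exact hderivpos t ht
  have : ψ 0 < ψ c := hmono ⟨le_refl 0, hc0.le⟩ ⟨hc0.le, le_refl c⟩ hc0
  have : ψ c ≤ ψ 0 := hmax c ⟨by linarith, hcε⟩
  linarith

variable {E : Type*} [NormedAddCommGroup E] [NormedSpace ℝ E]

lemma lineDeriv1 {f : E → ℝ} (hf : ContDiff ℝ (⊤ : ℕ∞) f) (x e : E) (t : ℝ) :
    HasDerivAt (fun s : ℝ => f (x + s • e)) (fderiv ℝ f (x + t • e) e) t := by
  have hγ : HasDerivAt (fun s : ℝ => x + s • e) e t := by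
    simpa using ((hasDerivAt_id (t:ℝ)).smul_const e).const_add x
  exact ((hf.differentiable (by simp)) _).hasFDerivAt.comp_hasDerivAt t hγ

lemma lineDeriv2 {f : E → ℝ} (hf : ContDiff ℝ (⊤ : ℕ∞) f) (x e : E) :
    HasDerivAt (fun s : ℝ => fderiv ℝ f (x + s • e) e)
      (fderiv ℝ (fderiv ℝ f) x e e) 0 := by
  have hγ : HasDerivAt (fun s : ℝ => x + s • e) e 0 := by
    simpa using ((hasDerivAt_id (0:ℝ)).smul_const e).const_add x
  have hdf : Differentiable ℝ (fderiv ℝ f) :=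
    (hf.fderiv_right (m := 1) ((by exact WithTop.coe_le_coe.2 (le_top : (1 + 1 : ℕ∞) ≤ ⊤)))).differentiable one_ne_zero
  have h1 : HasDerivAt (fun s : ℝ => fderiv ℝ f (x + s • e))
      (fderiv ℝ (fderiv ℝ f) x e) 0 := by
    have := (hdf (x + (0:ℝ) • e)).hasFDerivAt.comp_hasDerivAt 0 hγ
    simp at this; exact this
  have := h1.clm_apply (hasDerivAt_const (0:ℝ) e)
  simpa using this


theorem stmt15 (n : ℕ) (hn : 1 ≤ n) (a p : ℝ) (ha : a < 0) (hp : 0 < p) :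
    ¬∃ u : EuclideanSpace ℝ (Fin n) → ℝ,
      ContDiff ℝ (⊤ : ℕ∞) u ∧ (∀ x, 0 < u x) ∧
        ∀ x, lap n u x + a * u x ^ (p + 1) = 0 := by
  rintro ⟨u, hu, hupos, heq⟩
  have hp0 : p ≠ 0 := ne_of_gt hp
  have hna : 0 < -a := by linarith
  set α : ℝ := 2 / p with hαdef
  have hα : 0 < α := by positivity
  set q : ℝ := -α with hqdef
  have hqneg : q < 0 := by simp [hqdef]; linarith
  have hqp : q * p = -2 := by rw [hqdef, hαdef]; field_simp
  set K : ℝ := 4*α*(α+1) + 2*(n:ℝ)*α with hKdef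
  have hK : 0 < K := by
    have : (0:ℝ) ≤ (n:ℝ) := Nat.cast_nonneg n
    nlinarith
  have hu0 : 0 < u 0 := hupos 0
  set u0 : ℝ := u 0 with hu0def
  set B : ℝ := (K / (-a)) ^ (1/p) with hBdef
  have hB : 0 < B := Real.rpow_pos_of_pos (by positivity) _
  set R2 : ℝ := (B/u0 + 1) ^ p with hR2def
  have hR2 : 0 < R2 := Real.rpow_pos_of_pos (by positivity) _
  set R : ℝ := Real.sqrt R2 with hRdef
  have hRsq : R^2 = R2 := Real.sq_sqrt hR2.le
  have hR : 0 < R := Real.sqrt_pos.2 hR2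
  set C : ℝ := (K * R2 / (-a)) ^ (1/p) with hCdef
  have hC : 0 < C := Real.rpow_pos_of_pos (by positivity) _
  have hCp : C ^ p = K * R2 / (-a) := by
    rw [hCdef, ← Real.rpow_mul (by positivity), one_div, inv_mul_cancel₀ hp0, Real.rpow_one]
  set w : EuclideanSpace ℝ (Fin n) → ℝ := fun y => C * (R2 - ‖y‖^2) ^ q with hwdef
  have hCB : C = B * R2 ^ (1/p) := by
    rw [hCdef, hBdef, show K * R2 / -a = (K / -a) * R2 by ring,
      Real.mul_rpow (by positivity) hR2.le]
  have hR2p : R2 ^ (1/p) = B/u0 + 1 := by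
    rw [hR2def, ← Real.rpow_mul (by positivity), mul_one_div, div_self hp0, Real.rpow_one]
  have hw0 : w 0 < u0 := by
    have h1 : w 0 = C * R2 ^ q := by simp [hwdef]
    have h2 : C * R2 ^ q = B * R2 ^ (1/p + q) := by
      rw [hCB, Real.rpow_add hR2, mul_assoc]
    have h3 : (1:ℝ)/p + q = -(1/p) := by rw [hqdef, hαdef]; ring
    have h4 : R2 ^ (-(1/p)) = (B/u0 + 1)⁻¹ := by
      rw [Real.rpow_neg hR2.le, hR2p]
    have h5 : B * (B/u0 + 1)⁻¹ < u0 := by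
      rw [mul_inv_lt_iff₀ (by positivity)]
      have : u0 * (B/u0 + 1) = B + u0 := by field_simp
      rw [this]; linarith
    rw [h1, h2, h3, h4]; exact h5
  obtain ⟨z, hzmem, hz⟩ := (isCompact_closedBall (0 : EuclideanSpace ℝ (Fin n)) R).exists_isMaxOn
      ⟨0, Metric.mem_closedBall_self hR.le⟩ hu.continuous.continuousOn
  set M : ℝ := u z with hMdef
  have hM : 0 < M := hupos z
  have hMle : ∀ y : EuclideanSpace ℝ (Fin n), ‖y‖ ≤ R → u y ≤ M := by
    intro y hy
    exact hz (mem_closedBall_zero_iff.2 hy)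
  set ε : ℝ := min (R2/2) ((M/C) ^ (1/q)) with hεdef
  have hε : 0 < ε := lt_min (by linarith) (Real.rpow_pos_of_pos (by positivity) _)
  have hεR2 : ε < R2 := lt_of_le_of_lt (min_le_left _ _) (by linarith)
  set r : ℝ := Real.sqrt (R2 - ε) with hrdef
  have hr2 : r^2 = R2 - ε := Real.sq_sqrt (by linarith)
  have hrR : r < R := by
    rw [hrdef, hRdef]
    exact Real.sqrt_lt_sqrt (by linarith) (by linarith)
  have hr0 : 0 ≤ r := Real.sqrt_nonneg _
  -- near the boundary, w dominates u
  have hbdry : ∀ y : EuclideanSpace ℝ (Fin n), ‖y‖ < R → r < ‖y‖ → u y - w y ≤ 0 := by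
    intro y h1 h2
    have hny : 0 ≤ ‖y‖ := norm_nonneg y
    have hvy : 0 < R2 - ‖y‖^2 := by
      have := pow_lt_pow_left₀ h1 hny (two_ne_zero)
      linarith
    have hvyε : R2 - ‖y‖^2 ≤ ε := by
      have := pow_le_pow_left₀ hr0 h2.le 2
      linarith
    have h3 : ε ^ q ≤ (R2 - ‖y‖^2) ^ q := Real.rpow_le_rpow_of_nonpos hvy hvyε hqneg.le
    have h4 : M/C ≤ ε ^ q := by
      have h5 : ε ≤ (M/C) ^ (1/q) := min_le_right _ _
      have h6 : ((M/C) ^ (1/q)) ^ q ≤ ε ^ q :=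
        Real.rpow_le_rpow_of_nonpos hε h5 hqneg.le
      rwa [← Real.rpow_mul (by positivity), one_div, inv_mul_cancel₀ (ne_of_lt hqneg),
        Real.rpow_one] at h6
    have h7 : M ≤ w y := by
      have := mul_le_mul_of_nonneg_left (le_trans h4 h3) hC.le
      calc M = C * (M/C) := by field_simp
        _ ≤ C * (R2 - ‖y‖^2) ^ q := this
        _ = w y := rfl
    have := hMle y h1.le
    linarith
  -- maximum of u - w on the closed ball of radius r
  have hwcont : ContinuousOn w (Metric.closedBall (0 : EuclideanSpace ℝ (Fin n)) r) := by
    intro y hy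
    have hyr : ‖y‖ ≤ r := mem_closedBall_zero_iff.1 hy
    have h1 : R2 - ‖y‖^2 ≠ 0 := by
      have := pow_le_pow_left₀ (norm_nonneg y) hyr 2
      have : ε ≤ R2 - ‖y‖^2 := by linarith
      linarith
    exact (continuousAt_const.mul
      (((continuous_const.sub ((continuous_norm (E := EuclideanSpace ℝ (Fin n))).pow 2)).continuousAt).rpow_const
        (Or.inl h1))).continuousWithinAt
  obtain ⟨x₀, hx₀mem, hx₀max⟩ := (isCompact_closedBall (0 : EuclideanSpace ℝ (Fin n)) r).exists_isMaxOn
      ⟨0, Metric.mem_closedBall_self hr0⟩ (hu.continuous.continuousOn.sub hwcont)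
  have hx₀r : ‖x₀‖ ≤ r := mem_closedBall_zero_iff.1 hx₀mem
  have hφ0 : 0 < u x₀ - w x₀ := by
    have h1 : u 0 - w 0 ≤ u x₀ - w x₀ := hx₀max (Metric.mem_closedBall_self hr0)
    have : w 0 < u 0 := hw0
    simp only [hu0def] at hw0 ⊢
    linarith [hx₀max (Metric.mem_closedBall_self hr0)]
  have hglob : ∀ y : EuclideanSpace ℝ (Fin n), ‖y‖ < R → u y - w y ≤ u x₀ - w x₀ := by
    intro y hy
    by_cases hc : ‖y‖ ≤ r
    · exact hx₀max (mem_closedBall_zero_iff.2 hc)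
    · push_neg at hc
      exact le_trans (hbdry y hy hc) hφ0.le
  have hx₀R : ‖x₀‖ < R := lt_of_le_of_lt hx₀r hrR
  set v₀ : ℝ := R2 - ‖x₀‖^2 with hv₀def
  have hv₀ : 0 < v₀ := by
    have h1 := pow_lt_pow_left₀ hx₀R (norm_nonneg x₀) (two_ne_zero)
    simp only [hv₀def]
    linarith
  have key : ∀ i : Fin n, secondDeriv n u x₀ i i ≤
      C * (4*q*(q-1)*(x₀ i)^2 * v₀^(q-2) - 2*q*v₀^(q-1)) := by
    intro i
    set e : EuclideanSpace ℝ (Fin n) := EuclideanSpace.single i (1:ℝ) with hedef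
    have hne : ‖e‖ = 1 := by simp [hedef]
    set b : ℝ := x₀ i with hbdef
    set εi : ℝ := R - ‖x₀‖ with hεidef
    have hεi : 0 < εi := by simp only [hεidef]; linarith
    have hni : ∀ t : ℝ, ‖x₀ + t • e‖^2 = ‖x₀‖^2 + 2*b*t + t^2 := by
      intro t
      rw [norm_add_sq_real, real_inner_smul_right, norm_smul, hne]
      have : inner ℝ x₀ e = b := by
        simp [hedef, hbdef, EuclideanSpace.inner_single_right]
      rw [this]
      simp [Real.norm_eq_abs, sq_abs]
      ring
    set s : ℝ → ℝ := fun t => v₀ - 2*b*t - t^2 with hsdef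
    have hsid : ∀ t : ℝ, R2 - ‖x₀ + t • e‖^2 = s t := by
      intro t
      simp only [hsdef, hv₀def]
      rw [hni]; ring
    have hball : ∀ t ∈ Set.Ioo (-εi) εi, ‖x₀ + t • e‖ < R := by
      intro t ht
      calc ‖x₀ + t • e‖ ≤ ‖x₀‖ + ‖t • e‖ := norm_add_le _ _
        _ = ‖x₀‖ + |t| := by rw [norm_smul, hne, Real.norm_eq_abs, mul_one]
        _ < R := by
            have h1 : |t| < εi := abs_lt.2 ⟨ht.1, ht.2⟩
            simp only [hεidef] at h1
            linarith
    have hspos : ∀ t ∈ Set.Ioo (-εi) εi, 0 < s t := by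
      intro t ht
      rw [← hsid t]
      have h1 := pow_lt_pow_left₀ (hball t ht) (norm_nonneg _) (two_ne_zero)
      linarith
    have h0mem : (0:ℝ) ∈ Set.Ioo (-εi) εi := ⟨by linarith, hεi⟩
    have hs0 : s 0 = v₀ := by simp [hsdef]
    have hds : ∀ t : ℝ, HasDerivAt s (-(2*b) - 2*t) t := by
      intro t
      have h1 := (((hasDerivAt_id (t:ℝ)).const_mul (2*b)).const_sub v₀).sub (hasDerivAt_pow 2 t)
      refine h1.congr_deriv ?_
      push_cast; ring
    set ψ : ℝ → ℝ := fun t => u (x₀ + t • e) - C * (s t) ^ q with hψdef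
    set ψ' : ℝ → ℝ := fun t => fderiv ℝ u (x₀ + t • e) e
        - C * ((-(2*b) - 2*t) * q * s t ^ (q-1)) with hψ'def
    have hd : ∀ t ∈ Set.Ioo (-εi) εi, HasDerivAt ψ (ψ' t) t := by
      intro t ht
      exact (lineDeriv1 hu x₀ e t).sub
        (((hds t).rpow_const (Or.inl (hspos t ht).ne')).const_mul C)
    have hd2 : HasDerivAt ψ' (fderiv ℝ (fderiv ℝ u) x₀ e e
        - C * ((-(2*q)) * v₀ ^ (q-1) + (-(2*b) * q) * ((-(2*b)) * (q-1) * v₀ ^ (q-2)))) 0 := by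
      apply HasDerivAt.sub (lineDeriv2 hu x₀ e)
      have hg1 : HasDerivAt (fun t : ℝ => (-(2*b) - 2*t) * q) (-(2*q)) 0 := by
        have h1 := (((hasDerivAt_id (0:ℝ)).const_mul 2).const_sub (-(2*b))).mul_const q
        refine h1.congr_deriv ?_; ring
      have hg2 : HasDerivAt (fun t : ℝ => s t ^ (q-1))
          ((-(2*b) - 2*0) * (q-1) * s 0 ^ (q-1-1)) 0 :=
        (hds 0).rpow_const (Or.inl (hspos 0 h0mem).ne')
      have h2 := (hg1.mul hg2).const_mul C
      refine h2.congr_deriv ?_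
      rw [hs0, show q-1-1 = q-2 by ring]
      ring
    have hmaxψ : ∀ t ∈ Set.Ioo (-εi) εi, ψ t ≤ ψ 0 := by
      intro t ht
      have h1 : ψ t = u (x₀ + t • e) - w (x₀ + t • e) := by
        simp only [hψdef, hwdef, hsid t]
      have h2 : ψ 0 = u x₀ - w x₀ := by
        simp only [hψdef, hwdef, hs0, hv₀def]
        norm_num
      rw [h1, h2]
      exact hglob _ (hball t ht)
    have hm := secondTest hεi hd hd2 hmaxψ
    have hsd : secondDeriv n u x₀ i i = fderiv ℝ (fderiv ℝ u) x₀ e e := by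
      rw [secondDeriv, iteratedFDeriv_two_apply]
      simp [hedef]
    rw [hsd]
    have : C * ((-(2*q)) * v₀ ^ (q-1) + (-(2*b) * q) * ((-(2*b)) * (q-1) * v₀ ^ (q-2)))
        = C * (4*q*(q-1)*b^2 * v₀^(q-2) - 2*q*v₀^(q-1)) := by ring
    rw [hbdef]
    linarith [hm, this.symm.le]
  -- sum the per-coordinate estimates
  have hnormsum : ∑ i : Fin n, (x₀ i)^2 = ‖x₀‖^2 := by
    rw [EuclideanSpace.norm_eq, Real.sq_sqrt (by positivity)]
    exact Finset.sum_congr rfl fun i _ => by rw [Real.norm_eq_abs, sq_abs]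
  have hsum : ∑ i : Fin n, C * (4*q*(q-1)*(x₀ i)^2 * v₀^(q-2) - 2*q*v₀^(q-1))
      = C * (4*q*(q-1)*‖x₀‖^2 * v₀^(q-2) - 2*(n:ℝ)*q*v₀^(q-1)) := by
    have h1 : ∀ i : Fin n, C * (4*q*(q-1)*(x₀ i)^2 * v₀^(q-2) - 2*q*v₀^(q-1))
        = (C*4*q*(q-1)*v₀^(q-2)) * (x₀ i)^2 + (-(C*2*q*v₀^(q-1))) := fun i => by ring
    rw [Finset.sum_congr rfl fun i _ => h1 i, Finset.sum_add_distrib, ← Finset.mul_sum,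
      hnormsum, Finset.sum_const, Finset.card_univ, Fintype.card_fin, nsmul_eq_mul]
    ring
  have hlap : lap n u x₀ ≤ C * (4*q*(q-1)*‖x₀‖^2 * v₀^(q-2) - 2*(n:ℝ)*q*v₀^(q-1)) := by
    rw [lap, ← hsum]
    exact Finset.sum_le_sum fun i _ => key i
  -- the barrier inequality
  have hA : 0 < v₀ ^ (q-2) := Real.rpow_pos_of_pos hv₀ _
  have hv1 : v₀ ^ (q-1) = v₀ ^ (q-2) * v₀ := by
    rw [show q-1 = (q-2)+1 by ring, Real.rpow_add_one hv₀.ne']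
  have hwx₀ : 0 < w x₀ := by
    have : (0:ℝ) < (R2 - ‖x₀‖^2) ^ q := Real.rpow_pos_of_pos hv₀ _
    exact mul_pos hC this
  have hwpow : (w x₀) ^ (p+1) = C ^ (p+1) * v₀ ^ (q-2) := by
    have h1 : w x₀ = C * v₀ ^ q := rfl
    rw [h1, Real.mul_rpow hC.le (Real.rpow_nonneg hv₀.le q),
      ← Real.rpow_mul hv₀.le, show q*(p+1) = q-2 by rw [mul_add, hqp, mul_one]; ring]
  have hCp1 : (-a) * C ^ (p+1) = C * (K * R2) := by
    rw [Real.rpow_add_one hC.ne', hCp]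
    field_simp [ha.ne]
  have hx₀2 : ‖x₀‖^2 ≤ R2 := by simp only [hv₀def] at hv₀; linarith
  have hv₀R2 : v₀ ≤ R2 := by
    simp only [hv₀def]; linarith [sq_nonneg ‖x₀‖]
  have hineq : 4*α*(α+1)*‖x₀‖^2 + 2*(n:ℝ)*α*v₀ ≤ K * R2 := by
    have c1 : (0:ℝ) ≤ 4*α*(α+1) :=
      (mul_pos (mul_pos (by norm_num : (0:ℝ) < 4) hα) (by linarith : (0:ℝ) < α+1)).le
    have c2 : (0:ℝ) ≤ 2*(n:ℝ)*α := mul_nonneg (by positivity) hα.le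
    have t1 := mul_le_mul_of_nonneg_left hx₀2 c1
    have t2 := mul_le_mul_of_nonneg_left hv₀R2 c2
    have hKR : K * R2 = 4*α*(α+1)*R2 + 2*(n:ℝ)*α*R2 := by rw [hKdef]; ring
    rw [hKR]
    linarith [t1, t2]
  have hbarrier : C * (4*q*(q-1)*‖x₀‖^2 * v₀^(q-2) - 2*(n:ℝ)*q*v₀^(q-1))
      ≤ (-a) * (w x₀) ^ (p+1) := by
    have h1 : C * (4*q*(q-1)*‖x₀‖^2 * v₀^(q-2) - 2*(n:ℝ)*q*v₀^(q-1))
        = (C * v₀^(q-2)) * (4*α*(α+1)*‖x₀‖^2 + 2*(n:ℝ)*α*v₀) := by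
      rw [hv1, hqdef]; ring
    have h2 : (-a) * (w x₀)^(p+1) = (C * v₀^(q-2)) * (K * R2) := by
      rw [hwpow, show (-a) * (C^(p+1) * v₀^(q-2)) = ((-a)*C^(p+1)) * v₀^(q-2) by ring, hCp1]
      ring
    rw [h1, h2]
    exact mul_le_mul_of_nonneg_left hineq (by positivity)
  have hstrict : (-a) * (w x₀) ^ (p+1) < (-a) * (u x₀) ^ (p+1) := by
    apply mul_lt_mul_of_pos_left _ hna
    exact Real.rpow_lt_rpow hwx₀.le (by linarith) (by linarith)
  have hlapval : lap n u x₀ = (-a) * (u x₀) ^ (p+1) := by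
    linear_combination heq x₀
  exact absurd hlapval (ne_of_lt (lt_of_le_of_lt (hlap.trans hbarrier) hstrict))
end
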